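/- Let (M,π) be a Poisson manifold and B a π-admissible closed 2-form, so that Φ_B = Id + B^♯∘π^♯ : T*M → T*M is invertible and π_B^♯ := π^♯ ∘ Φ_B^{-1} defines a bivector π_B. Then Φ_B : (T*M)_π → (T*M)_{π_B} is a Lie algebroid isomorphism: π_B^♯ ∘ Φ_B = π^♯ and Φ_B([α,β]_π) = [Φ_B α, Φ_B β]_{π_B} for all 1-forms α, β. -/

import Mathlib

/-!
Algebraic model of a smooth manifold `M`: `R` is its commutative `ℝ`-algebra of
smooth functions `C^∞(M)`, vector fields are derivations of `R` (with the usual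
Lie bracket of vector fields given by the commutator), `1`-forms are `R`-linear
functionals on vector fields, and `2`-forms are skew-symmetric `R`-bilinear
forms on vector fields.  Exterior derivatives, Lie derivatives and interior
products are given by the usual Cartan formulas.
-/

variable {R : Type*} [CommRing R] [Algebra ℝ R]

/-- Vector fields on `M`. -/
abbrev Vec (R : Type*) [CommRing R] [Algebra ℝ R] := Derivation ℝ R R

/-- `1`-forms on `M`. -/
abbrev Form1 (R : Type*) [CommRing R] [Algebra ℝ R] := Vec R →ₗ[R] R

/-- The Courant bracket `⟦(X,α),(Y,β)⟧ = ([X,Y], L_X β − i_Y dα)` on sections of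
`𝕋M = TM ⊕ T*M`, written out pointwise via the Cartan formulas
`(L_X β)(Z) = X(β(Z)) − β([X,Z])` and `dα(Y,Z) = Y(α(Z)) − Z(α(Y)) − α([Y,Z])`. -/
def Cour (p q : Vec R × (Vec R → R)) : Vec R × (Vec R → R) :=
  (⁅p.1, q.1⁆,
    fun Z => p.1 (q.2 Z) - q.2 ⁅p.1, Z⁆ -
      (q.1 (p.2 Z) - Z (p.2 q.1) - p.2 ⁅q.1, Z⁆))

/-- The exterior derivative of a `2`-form `B` (given via `B^♯ : X ↦ B(X,·)`),
evaluated on vector fields `X, Y, Z` by the Cartan formula. -/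
def dCartan (B : Vec R →ₗ[R] Form1 R) (X Y Z : Vec R) : R :=
  X (B Y Z) - Y (B X Z) + Z (B X Y) -
    B ⁅X, Y⁆ Z + B ⁅X, Z⁆ Y - B ⁅Y, Z⁆ X

/-- The differential of a function: `df(X) = X(f)`. -/
def dR (f : R) : Form1 R where
  toFun X := X f
  map_add' X Y := rfl
  map_smul' c X := rfl

lemma lie_smul' (f : R) (X Y : Vec R) : ⁅X, f • Y⁆ = f • ⁅X, Y⁆ + X f • Y := by
  ext g
  simp [Derivation.commutator_apply, Derivation.leibniz, smul_eq_mul]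

/-- The Lie derivative of a `1`-form: `(L_X β)(Y) = X(β(Y)) − β([X,Y])`. -/
def lieD (X : Vec R) (β : Form1 R) : Form1 R where
  toFun Y := X (β Y) - β ⁅X, Y⁆
  map_add' Y Z := by simp; ring
  map_smul' c Y := by
    simp [lie_smul', smul_eq_mul, Derivation.leibniz]
    ring

/-- The Koszul bracket of `1`-forms on a Poisson manifold:
`[α,β]_π = L_{π^♯α} β − L_{π^♯β} α − d(π(α,β))`, where `π(α,β) = β(π^♯ α)`. -/
def brP (p : Form1 R →ₗ[R] Vec R) (α β : Form1 R) : Form1 R :=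
  lieD (p α) β - lieD (p β) α - dR (β (p α))

/-- The bracket `{f,g} = π(df,dg)` of functions induced by the bivector. -/
def poissonBr (p : Form1 R →ₗ[R] Vec R) (f g : R) : R := p (dR f) g

/-- The Koszul bracket of `1`-forms for a bivector given as a plain map
`p : Ω¹(M) → 𝔛(M)` (used for the gauge-transformed bivector `π_B`). -/
def brP' (p : Form1 R → Vec R) (α β : Form1 R) : Form1 R :=
  lieD (p α) β - lieD (p β) α - dR (β (p α))

/-!
With `X = π^♯α` and `Y = π^♯β`, the `π_B`-bracket of `α + i_X B` and `β + i_Y B` has anchors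
`π_B^♯(α + i_X B) = X`, `π_B^♯(β + i_Y B) = Y`, so it equals
`[α,β]_π + (L_X i_Y B − L_Y i_X B − d(B(Y,X)))`.  Because `B` is closed, Cartan's formula
collapses the bracketed term to `i_{[X,Y]} B`, and because `π` is Poisson,
`[X,Y] = π^♯[α,β]_π`.
-/

@[simp]
lemma dR_apply (f : R) (X : Vec R) : dR f X = X f := rfl

@[simp]
lemma lieD_apply (X : Vec R) (β : Form1 R) (Y : Vec R) :
    lieD X β Y = X (β Y) - β ⁅X, Y⁆ := rfl

lemma dR_add (f g : R) : dR (f + g) = dR f + dR g := by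
  ext X
  simp

lemma lieD_add (X : Vec R) (β γ : Form1 R) : lieD X (β + γ) = lieD X β + lieD X γ := by
  ext Y
  simp only [lieD_apply, LinearMap.add_apply, map_add]
  ring

lemma brP_apply (p : Form1 R →ₗ[R] Vec R) (α β : Form1 R) (Z : Vec R) :
    brP p α β Z =
      p α (β Z) - β ⁅p α, Z⁆ - (p β (α Z) - α ⁅p β, Z⁆) - Z (β (p α)) := by
  simp [brP]

lemma lieD_sub_lieD_sub_dR_of_closed (B : Vec R →ₗ[R] Form1 R)
    (hB : ∀ X Y : Vec R, B X Y = - B Y X) (hdB : ∀ X Y Z : Vec R, dCartan B X Y Z = 0)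
    (X Y : Vec R) :
    lieD X (B Y) - lieD Y (B X) - dR (B Y X) = B ⁅X, Y⁆ := by
  ext Z
  have hclosed := hdB X Y Z
  simp only [dCartan, hB X Y, hB ⁅X, Z⁆ Y, hB ⁅Y, Z⁆ X, map_neg] at hclosed
  simp only [LinearMap.sub_apply, lieD_apply, dR_apply]
  linear_combination hclosed

section Poisson

variable {p : Form1 R →ₗ[R] Vec R} (hp : ∀ α β : Form1 R, β (p α) = - α (p β))
  (hJac : ∀ f g h : R,
    poissonBr p f (poissonBr p g h) + poissonBr p g (poissonBr p h f) +
      poissonBr p h (poissonBr p f g) = 0)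

/- Both sides of each anchor identity below are derivations, so they are compared on a function
`h`; skew-symmetry rewrites `(π^♯γ) h` as `−γ(π^♯ dh)`, which reduces a bracket with a general
form to brackets with exact forms, and the exact case is the Jacobi identity. -/

include hp in
lemma anchor_apply_eq_neg (γ : Form1 R) (h : R) :
    p γ h = - γ (p (dR h)) := by
  simpa using hp γ (dR h)

include hp hJac in
lemma lie_anchor_dR_dR (f g : R) :
    ⁅p (dR f), p (dR g)⁆ = p (dR (poissonBr p f g)) := by
  ext h
  have hJac' := hJac f g h
  simp only [poissonBr] at hJac' ⊢
  rw [Derivation.commutator_apply, anchor_apply_eq_neg hp (dR f) h,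
    anchor_apply_eq_neg hp (dR (p (dR f) g)) h, dR_apply, dR_apply, map_neg]
  linear_combination hJac'

include hp hJac in
lemma lie_anchor_dR (α : Form1 R) (g : R) :
    ⁅p α, p (dR g)⁆ = p (brP p α (dR g)) := by
  ext h
  rw [anchor_apply_eq_neg hp (brP p α (dR g)) h, brP_apply, ← neg_neg (α (p (dR h))),
    ← anchor_apply_eq_neg hp α h, lie_anchor_dR_dR hp hJac g h, hp _ α]
  simp only [poissonBr, dR_apply, map_neg, Derivation.commutator_apply]
  ring

include hp hJac in
lemma anchor_brP (α β : Form1 R) :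
    p (brP p α β) = ⁅p α, p β⁆ := by
  ext h
  rw [anchor_apply_eq_neg hp (brP p α β) h, brP_apply, ← neg_neg (β (p (dR h))),
    ← neg_neg (α (p (dR h))), ← anchor_apply_eq_neg hp β h, ← anchor_apply_eq_neg hp α h,
    lie_anchor_dR hp hJac α h, hp _ β, brP_apply, hp β α, ← lie_skew (p (dR h)) (p β), map_neg]
  simp only [dR_apply, map_neg, Derivation.commutator_apply]
  ring

end Poisson

lemma brP_add_gauge (p : Form1 R →ₗ[R] Vec R) (B : Vec R →ₗ[R] Form1 R)
    (hB : ∀ X Y : Vec R, B X Y = - B Y X) (hdB : ∀ X Y Z : Vec R, dCartan B X Y Z = 0)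
    (α β : Form1 R) :
    brP p α β + B ⁅p α, p β⁆ =
      lieD (p α) (β + B (p β)) - lieD (p β) (α + B (p α)) - dR ((β + B (p β)) (p α)) := by
  rw [← lieD_sub_lieD_sub_dR_of_closed B hB hdB, lieD_add, lieD_add, LinearMap.add_apply,
    dR_add, brP]
  abel

theorem PhiB_algebroid_isomorphism_general
    (p : Form1 R →ₗ[R] Vec R)
    (hp : ∀ α β : Form1 R, β (p α) = - α (p β))
    (hJac : ∀ f g h : R,
      poissonBr p f (poissonBr p g h) + poissonBr p g (poissonBr p h f) +
        poissonBr p h (poissonBr p f g) = 0)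
    (B : Vec R →ₗ[R] Form1 R) (hB : ∀ X Y : Vec R, B X Y = - B Y X)
    (hdB : ∀ X Y Z : Vec R, dCartan B X Y Z = 0)
    -- `π`-admissibility: `Φ_B : α ↦ α + B(π^♯ α)` is invertible, with inverse `Ψ`:
    (Ψ : Form1 R → Form1 R)
    (hΨ₂ : ∀ α : Form1 R, Ψ (α + B (p α)) = α) :
    (∀ α : Form1 R, p (Ψ (α + B (p α))) = p α) ∧
    (∀ α β : Form1 R,
        brP p α β + B (p (brP p α β)) =
          brP' (fun γ => p (Ψ γ)) (α + B (p α)) (β + B (p β))) := by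
  refine ⟨fun α => by rw [hΨ₂], fun α β => ?_⟩
  rw [anchor_brP hp hJac, brP_add_gauge p B hB hdB, brP', hΨ₂, hΨ₂]

/-- Let `(M,π)` be a Poisson manifold and `B` a `π`-admissible closed `2`-form,
so that `Φ_B = Id + B^♯∘π^♯ : T*M → T*M` is invertible (with inverse `Ψ`) and
`π_B^♯ := π^♯ ∘ Φ_B^{-1}` defines a bivector `π_B` (which may be assumed to be
Poisson).  Then `Φ_B : (T*M)_π → (T*M)_{π_B}` is a Lie algebroid isomorphism:
`π_B^♯ ∘ Φ_B = π^♯` and `Φ_B([α,β]_π) = [Φ_B α, Φ_B β]_{π_B}` for all `1`-forms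
`α, β`. -/
theorem PhiB_algebroid_isomorphism
    (p : Form1 R →ₗ[R] Vec R)
    (hp : ∀ α β : Form1 R, β (p α) = - α (p β))
    (hJac : ∀ f g h : R,
      poissonBr p f (poissonBr p g h) + poissonBr p g (poissonBr p h f) +
        poissonBr p h (poissonBr p f g) = 0)
    (B : Vec R →ₗ[R] Form1 R) (hB : ∀ X Y : Vec R, B X Y = - B Y X)
    (hdB : ∀ X Y Z : Vec R, dCartan B X Y Z = 0)
    -- `π`-admissibility: `Φ_B : α ↦ α + B(π^♯ α)` is invertible, with inverse `Ψ`: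
    (Ψ : Form1 R → Form1 R)
    (hΨ₁ : ∀ α : Form1 R, (Ψ α) + B (p (Ψ α)) = α)
    (hΨ₂ : ∀ α : Form1 R, Ψ (α + B (p α)) = α) :
    (∀ α : Form1 R, p (Ψ (α + B (p α))) = p α) ∧
    (∀ α β : Form1 R,
        brP p α β + B (p (brP p α β)) =
          brP' (fun γ => p (Ψ γ)) (α + B (p α)) (β + B (p β))) :=
  PhiB_algebroid_isomorphism_general p hp hJac B hB hdB Ψ hΨ₂
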